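/- arXiv:1111.3549 — 3 statements merged into one kernel-verified Lean document; each statement's English description precedes it below -/
import Mathlib

section
/- Let F be a real symmetric positive semidefinite n×n matrix and set C = (I + iF)², viewed as a complex matrix. Then C is invertible and the imaginary part of C⁻¹, defined as (C⁻¹ - (C⁻¹)*)/(2i), is negative semidefinite. Moreover it is negative definite if and only if F is positive definite. -/
open Matrix
open scoped ComplexOrder

/-!
Put `G = F` viewed as a complex matrix and `A = 1 + iG`, so that `C = A²` and, `G` being
Hermitian, `Aᴴ = 1 - iG`. Then `Aᴴ A = 1 + G²` is positive definite, so `A` and `C` are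
invertible, and `Im C = 2G`. The identity `C⁻¹ - C⁻ᴴ = C⁻¹ (Cᴴ - C) C⁻ᴴ` gives
`-Im C⁻¹ = C⁻¹ (Im C) C⁻ᴴ = C⁻¹ (2G) C⁻ᴴ`, a congruence of `2G` by an invertible matrix, which
preserves both positive semidefiniteness and positive definiteness.
-/

section ComplexAlgebra

variable {A : Type*} [Ring A] [Algebra ℂ A]

theorem one_sub_I_smul_mul_one_add_I_smul (g : A) :
    (1 - Complex.I • g) * (1 + Complex.I • g) = 1 + g * g := by
  simp only [sub_mul, mul_add, one_mul, mul_one, smul_mul_assoc, mul_smul_comm]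
  match_scalars <;> simp [← sq, Complex.I_sq]

theorem inv_two_I_smul_one_add_I_smul_sq_sub (g : A) :
    (2 * Complex.I)⁻¹ • ((1 + Complex.I • g) ^ 2 - (1 - Complex.I • g) ^ 2) = (2 : ℂ) • g := by
  simp only [sq, sub_mul, mul_sub, add_mul, mul_add, one_mul, mul_one, smul_mul_assoc,
    mul_smul_comm]
  match_scalars <;> field_simp <;> ring_nf

end ComplexAlgebra

namespace Matrix

variable {n : Type*}

theorem posDef_smul_iff {G : Matrix n n ℂ} {c : ℂ} (hc : 0 < c) : (c • G).PosDef ↔ G.PosDef := by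
  refine ⟨fun h => ?_, fun h => h.smul hc⟩
  simpa [smul_smul, hc.ne'] using h.smul (inv_pos.mpr hc)

variable [DecidableEq n]

theorem IsHermitian.conjTranspose_one_add_I_smul {G : Matrix n n ℂ} (hG : G.IsHermitian) :
    (1 + Complex.I • G)ᴴ = 1 - Complex.I • G := by
  simp [hG.eq, sub_eq_add_neg]

variable [Fintype n]

theorem inv_sub_conjTranspose_inv {α : Type*} [CommRing α] [StarRing α] (C : Matrix n n α) :
    C⁻¹ - C⁻¹ᴴ = C⁻¹ * (Cᴴ - C) * C⁻¹ᴴ := by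
  rw [conjTranspose_nonsing_inv]
  exact inv_sub_inv (isUnit_conjTranspose C).symm

open scoped MatrixOrder in
theorem PosSemidef.map_ofReal {𝕜 : Type*} [RCLike 𝕜] {F : Matrix n n ℝ} (hF : F.PosSemidef) :
    (F.map (algebraMap ℝ 𝕜)).PosSemidef := by
  obtain ⟨B, rfl⟩ := CStarAlgebra.nonneg_iff_eq_star_mul_self.mp hF.nonneg
  rw [star_eq_conjTranspose, ← RingHom.mapMatrix_apply, map_mul, RingHom.mapMatrix_apply,
    RingHom.mapMatrix_apply, conjTranspose_map _ (fun a => (RCLike.conj_ofReal a).symm)]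
  exact posSemidef_conjTranspose_mul_self _

theorem PosSemidef.posDef_map_ofReal_iff {𝕜 : Type*} [RCLike 𝕜] {F : Matrix n n ℝ}
    (hF : F.PosSemidef) : (F.map (algebraMap ℝ 𝕜)).PosDef ↔ F.PosDef := by
  rw [hF.map_ofReal.posDef_iff_det_ne_zero, hF.posDef_iff_det_ne_zero, ← RingHom.mapMatrix_apply,
    ← RingHom.map_det, map_ne_zero]

theorem IsHermitian.isUnit_one_add_I_smul {G : Matrix n n ℂ} (hG : G.IsHermitian) :
    IsUnit (1 + Complex.I • G) := by
  have hpd : ((1 + Complex.I • G)ᴴ * (1 + Complex.I • G)).PosDef := by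
    rw [hG.conjTranspose_one_add_I_smul, one_sub_I_smul_mul_one_add_I_smul]
    simpa only [hG.eq] using PosDef.one.add_posSemidef (posSemidef_conjTranspose_mul_self G)
  exact isUnit_of_mul_isUnit_right hpd.isUnit

end Matrix

theorem im_inv_neg_semidef_general
    (n : ℕ) (F : Matrix (Fin n) (Fin n) ℝ)
    (hpsd : F.PosSemidef)
    (C : Matrix (Fin n) (Fin n) ℂ)
    (hC : C = (1 + Complex.I • F.map Complex.ofReal) ^ 2) :
    IsUnit C ∧
    (-((2 * Complex.I)⁻¹ • (C⁻¹ - (C⁻¹)ᴴ))).PosSemidef ∧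
    ((-((2 * Complex.I)⁻¹ • (C⁻¹ - (C⁻¹)ᴴ))).PosDef ↔ F.PosDef) := by
  set G : Matrix (Fin n) (Fin n) ℂ := F.map Complex.ofReal
  have hG : G.PosSemidef := hpsd.map_ofReal
  have hCunit : IsUnit C := hC ▸ hG.isHermitian.isUnit_one_add_I_smul.pow 2
  have hIm : -((2 * Complex.I)⁻¹ • (C⁻¹ - C⁻¹ᴴ)) = C⁻¹ * ((2 : ℂ) • G) * star C⁻¹ := by
    rw [inv_sub_conjTranspose_inv, ← neg_sub, hC, conjTranspose_pow,
      hG.isHermitian.conjTranspose_one_add_I_smul, ← inv_two_I_smul_one_add_I_smul_sq_sub,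
      star_eq_conjTranspose, mul_neg, neg_mul, smul_neg, neg_neg, mul_smul_comm, smul_mul_assoc]
  have hU : IsUnit C⁻¹ := isUnit_nonsing_inv_iff.mpr hCunit
  refine ⟨hCunit, ?_, ?_⟩
  · rw [hIm, hU.posSemidef_star_right_conjugate_iff]
    exact hG.smul zero_le_two
  · rw [hIm, hU.posDef_star_right_conjugate_iff, posDef_smul_iff two_pos]
    exact hpsd.posDef_map_ofReal_iff

/-- For F real symmetric positive semidefinite and C = (I + iF)², the matrix C is
invertible, Im C⁻¹ = (C⁻¹ - (C⁻¹)*)/(2i) is negative semidefinite, and it is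
negative definite iff F is positive definite. -/
theorem im_inv_neg_semidef
    (n : ℕ) (F : Matrix (Fin n) (Fin n) ℝ)
    (hsymm : F.IsSymm) (hpsd : F.PosSemidef)
    (C : Matrix (Fin n) (Fin n) ℂ)
    (hC : C = (1 + Complex.I • F.map Complex.ofReal) ^ 2) :
    IsUnit C ∧
    (-((2 * Complex.I)⁻¹ • (C⁻¹ - (C⁻¹)ᴴ))).PosSemidef ∧
    ((-((2 * Complex.I)⁻¹ • (C⁻¹ - (C⁻¹)ᴴ))).PosDef ↔ F.PosDef) :=
  im_inv_neg_semidef_general n F hpsd C hC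
end

section
/- Let Λ : [0,∞) → (0,∞) be continuous and of increasing order of magnitude, i.e. Λ(x) ≥ Λ(y)/C₀ whenever x ≥ y, for some C₀ ≥ 1. Then there is a constant C depending only on C₀ such that for every h > 0 and every u ∈ C^∞([0,∞)) with u and u' in L², setting L = h/Λ(0), one has √(hΛ(0)) |u(0)| ≤ C ( ‖Λ u‖_{L²(0,L)} + ‖h u'‖_{L²(0,L)} ). -/
open MeasureTheory

lemma my_sqrt_add_le (x y : ℝ) (hx : 0 ≤ x) (hy : 0 ≤ y) :
    Real.sqrt (x + y) ≤ Real.sqrt x + Real.sqrt y := by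
  have hsx := Real.sq_sqrt hx
  have hsy := Real.sq_sqrt hy
  have h1 := Real.sqrt_nonneg x
  have h2 := Real.sqrt_nonneg y
  have : x + y ≤ (Real.sqrt x + Real.sqrt y) ^ 2 := by nlinarith
  calc Real.sqrt (x + y) ≤ Real.sqrt ((Real.sqrt x + Real.sqrt y) ^ 2) :=
        Real.sqrt_le_sqrt this
    _ = Real.sqrt x + Real.sqrt y := by
        rw [Real.sqrt_sq (by positivity)]

set_option maxHeartbeats 1000000 in
/-- Weighted trace estimate: if Λ > 0 is continuous and quasi-monotone with
constant C₀ (Λ(x) ≥ Λ(y)/C₀ for x ≥ y ≥ 0), then with L = h/Λ(0),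
√(hΛ(0)) |u(0)| ≤ C (‖Λu‖_{L²(0,L)} + ‖hu'‖_{L²(0,L)}), with C depending only
on C₀. -/
theorem weighted_trace_estimate :
    ∀ C₀ : ℝ, 1 ≤ C₀ → ∃ C > 0,
      ∀ Λ : ℝ → ℝ, ContinuousOn Λ (Set.Ici 0) → (∀ x, 0 ≤ x → 0 < Λ x) →
        (∀ x y, 0 ≤ y → y ≤ x → Λ y / C₀ ≤ Λ x) →
        ∀ h : ℝ, 0 < h →
          ∀ u : ℝ → ℝ, ContDiff ℝ (⊤ : ℕ∞) u →
            IntegrableOn (fun t => (u t) ^ 2) (Set.Ioi 0) →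
            IntegrableOn (fun t => (deriv u t) ^ 2) (Set.Ioi 0) →
            Real.sqrt (h * Λ 0) * |u 0| ≤
              C * (Real.sqrt (∫ t in Set.Ioc (0 : ℝ) (h / Λ 0), (Λ t * u t) ^ 2)
                + Real.sqrt (∫ t in Set.Ioc (0 : ℝ) (h / Λ 0), (h * deriv u t) ^ 2)) := by
  intro C₀ hC₀
  refine ⟨2 * C₀, by linarith, ?_⟩
  intro Λ hΛc hΛpos hΛmono h hh u hu _ _
  have hΛ0 : 0 < Λ 0 := hΛpos 0 le_rfl
  set L : ℝ := h / Λ 0 with hLdef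
  have hLpos : 0 < L := div_pos hh hΛ0
  have hucont : Continuous u := hu.continuous
  have hu'cont : Continuous (deriv u) := hu.continuous_deriv (by simp)
  -- notation for the integrals
  set A : ℝ := ∫ t in Set.Ioc (0 : ℝ) L, (Λ t * u t) ^ 2 with hA
  set B : ℝ := ∫ t in Set.Ioc (0 : ℝ) L, (h * deriv u t) ^ 2 with hB
  set I1 : ℝ := ∫ t in Set.Ioc (0 : ℝ) L, u t ^ 2 with hI1
  set I2 : ℝ := ∫ t in Set.Ioc (0 : ℝ) L, (deriv u t) ^ 2 with hI2
  have hAnn : 0 ≤ A := setIntegral_nonneg measurableSet_Ioc (fun t _ => sq_nonneg _)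
  have hBnn : 0 ≤ B := setIntegral_nonneg measurableSet_Ioc (fun t _ => sq_nonneg _)
  have hI1nn : 0 ≤ I1 := setIntegral_nonneg measurableSet_Ioc (fun t _ => sq_nonneg _)
  have hI2nn : 0 ≤ I2 := setIntegral_nonneg measurableSet_Ioc (fun t _ => sq_nonneg _)
  -- integrability facts
  have hIu2 : IntegrableOn (fun t => u t ^ 2) (Set.Ioc (0:ℝ) L) :=
    (hucont.pow 2).integrableOn_Ioc
  have hIu'2 : IntegrableOn (fun t => (deriv u t) ^ 2) (Set.Ioc (0:ℝ) L) :=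
    (hu'cont.pow 2).integrableOn_Ioc
  have hILu2 : IntegrableOn (fun t => (Λ t * u t) ^ 2) (Set.Ioc (0:ℝ) L) := by
    have hcont : ContinuousOn (fun t => (Λ t * u t) ^ 2) (Set.Icc (0:ℝ) L) :=
      ((hΛc.mono (fun x hx => hx.1)).mul hucont.continuousOn).pow 2
    exact hcont.integrableOn_Icc.mono_set Set.Ioc_subset_Icc_self
  -- the constant K
  set K : ℝ := ∫ s in (0:ℝ)..L, (u s ^ 2 / L + L * (deriv u s) ^ 2) with hKdef
  have hKint : ∀ a b : ℝ, IntervalIntegrable (fun s => 2 * u s * deriv u s) volume a b :=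
    fun a b => (((continuous_const.mul hucont).mul hu'cont)).intervalIntegrable a b
  have hKabsint : IntervalIntegrable (fun s => |2 * u s * deriv u s|) volume 0 L :=
    (((continuous_const.mul hucont).mul hu'cont).abs).intervalIntegrable 0 L
  -- Step 1: pointwise bound u 0 ^ 2 ≤ u t ^ 2 + K on Icc 0 L
  have hstep1 : ∀ t ∈ Set.Icc (0:ℝ) L, u 0 ^ 2 ≤ u t ^ 2 + K := by
    intro t ht
    have hderiv : ∀ s ∈ Set.uIcc (0:ℝ) t,
        HasDerivAt (fun s => u s ^ 2) (2 * u s * deriv u s) s := by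
      intro s _
      have := ((hu.differentiable (by simp)) s).hasDerivAt.fun_pow 2
      simpa [mul_comm, mul_assoc, mul_left_comm] using this
    have ftc : ∫ s in (0:ℝ)..t, 2 * u s * deriv u s = u t ^ 2 - u 0 ^ 2 :=
      intervalIntegral.integral_eq_sub_of_hasDerivAt hderiv (hKint 0 t)
    have h1 : u 0 ^ 2 - u t ^ 2 ≤ |∫ s in (0:ℝ)..t, 2 * u s * deriv u s| := by
      rw [ftc]
      calc u 0 ^ 2 - u t ^ 2 = -(u t ^ 2 - u 0 ^ 2) := by ring
        _ ≤ |u t ^ 2 - u 0 ^ 2| := neg_le_abs _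
    have h2 : |∫ s in (0:ℝ)..t, 2 * u s * deriv u s|
        ≤ ∫ s in (0:ℝ)..t, |2 * u s * deriv u s| :=
      intervalIntegral.abs_integral_le_integral_abs ht.1
    have h3 : (∫ s in (0:ℝ)..t, |2 * u s * deriv u s|)
        ≤ ∫ s in (0:ℝ)..L, |2 * u s * deriv u s| := by
      apply intervalIntegral.integral_mono_interval le_rfl ht.1 ht.2
      · exact Filter.Eventually.of_forall (fun s => abs_nonneg _)
      · exact hKabsint
    have h4 : (∫ s in (0:ℝ)..L, |2 * u s * deriv u s|) ≤ K := by
      apply intervalIntegral.integral_mono_on hLpos.le hKabsint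
      · exact ((hucont.pow 2).div_const L |>.add
          (continuous_const.mul (hu'cont.pow 2))).intervalIntegrable 0 L
      · intro s _
        have habs : |2 * u s * deriv u s| = 2 * |u s| * |deriv u s| := by
          rw [abs_mul, abs_mul]; simp [abs_of_nonneg]
        rw [habs]
        have h5 : u s ^ 2 = |u s| ^ 2 := (sq_abs _).symm
        have h6 : (deriv u s) ^ 2 = |deriv u s| ^ 2 := (sq_abs _).symm
        rw [h5, h6]
        rw [div_add' _ _ _ hLpos.ne', le_div_iff₀ hLpos]
        nlinarith [sq_nonneg (|u s| - L * |deriv u s|), abs_nonneg (u s),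
          abs_nonneg (deriv u s)]
    linarith
  -- Step 2: integrate over Ioc 0 L
  have hstep2 : L * u 0 ^ 2 ≤ I1 + L * K := by
    have hmono : (∫ t in Set.Ioc (0:ℝ) L, u 0 ^ 2)
        ≤ ∫ t in Set.Ioc (0:ℝ) L, (u t ^ 2 + K) := by
      apply setIntegral_mono_on
      · exact integrableOn_const measure_Ioc_lt_top.ne
      · exact hIu2.add (integrableOn_const measure_Ioc_lt_top.ne)
      · exact measurableSet_Ioc
      · intro t ht
        exact hstep1 t ⟨ht.1.le, ht.2⟩
    have hlhs : (∫ t in Set.Ioc (0:ℝ) L, u 0 ^ 2) = L * u 0 ^ 2 := by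
      simp [Real.volume_Ioc, hLpos.le, smul_eq_mul]
    have hrhs : (∫ t in Set.Ioc (0:ℝ) L, (u t ^ 2 + K)) = I1 + L * K := by
      rw [integral_add hIu2 (integrableOn_const measure_Ioc_lt_top.ne)]
      simp [Real.volume_Ioc, hLpos.le, smul_eq_mul, hI1]
    rw [hlhs, hrhs] at hmono
    exact hmono
  -- Step 3: compute K
  have hKval : K = I1 / L + L * I2 := by
    rw [hKdef, intervalIntegral.integral_of_le hLpos.le]
    rw [integral_add (hIu2.div_const L) (hIu'2.const_mul L)]
    rw [integral_div, integral_const_mul]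
  -- Step 4: main quadratic inequality
  have hmain : L * u 0 ^ 2 ≤ 2 * I1 + L ^ 2 * I2 := by
    rw [hKval] at hstep2
    have : L * (I1 / L) = I1 := by field_simp
    nlinarith [hstep2]
  -- Step 5: Λ0² I1 ≤ C₀² A
  have hstep5 : Λ 0 ^ 2 * I1 ≤ C₀ ^ 2 * A := by
    have : (∫ t in Set.Ioc (0:ℝ) L, Λ 0 ^ 2 * u t ^ 2)
        ≤ ∫ t in Set.Ioc (0:ℝ) L, C₀ ^ 2 * (Λ t * u t) ^ 2 := by
      apply setIntegral_mono_on (hIu2.const_mul _) (hILu2.const_mul _) measurableSet_Ioc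
      intro t ht
      have h1 : Λ 0 / C₀ ≤ Λ t := hΛmono t 0 le_rfl ht.1.le
      have h2 : 0 < Λ 0 / C₀ := div_pos hΛ0 (by linarith)
      have h3 : (Λ 0 / C₀) ^ 2 ≤ Λ t ^ 2 := by nlinarith
      have hC₀pos : (0:ℝ) < C₀ := by linarith
      rw [mul_pow]
      calc Λ 0 ^ 2 * u t ^ 2 = C₀ ^ 2 * ((Λ 0 / C₀) ^ 2 * u t ^ 2) := by
            field_simp
        _ ≤ C₀ ^ 2 * (Λ t ^ 2 * u t ^ 2) := by
            apply mul_le_mul_of_nonneg_left _ (by positivity)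
            exact mul_le_mul_of_nonneg_right h3 (sq_nonneg _)
    rwa [integral_const_mul, integral_const_mul] at this
  -- Step 6: h² I2 = B
  have hstep6 : h ^ 2 * I2 = B := by
    rw [hB, hI2, ← integral_const_mul]
    congr 1
    ext t
    ring
  -- combine : h Λ0 u0² ≤ 2 C₀² A + B
  have hcomb : h * Λ 0 * u 0 ^ 2 ≤ 2 * C₀ ^ 2 * A + B := by
    have hLA : h * Λ 0 = Λ 0 ^ 2 * L := by
      rw [hLdef]; field_simp
    have hL2 : Λ 0 ^ 2 * L ^ 2 = h ^ 2 := by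
      rw [hLdef]; field_simp
    have h1 : Λ 0 ^ 2 * (L * u 0 ^ 2) ≤ Λ 0 ^ 2 * (2 * I1 + L ^ 2 * I2) :=
      mul_le_mul_of_nonneg_left hmain (sq_nonneg _)
    calc h * Λ 0 * u 0 ^ 2 = Λ 0 ^ 2 * (L * u 0 ^ 2) := by rw [hLA]; ring
      _ ≤ Λ 0 ^ 2 * (2 * I1 + L ^ 2 * I2) := h1
      _ = 2 * (Λ 0 ^ 2 * I1) + (Λ 0 ^ 2 * L ^ 2) * I2 := by ring
      _ ≤ 2 * (C₀ ^ 2 * A) + h ^ 2 * I2 := by rw [hL2]; linarith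
      _ = 2 * C₀ ^ 2 * A + B := by rw [hstep6]; ring
  -- final sqrt manipulation
  have hhΛ : 0 ≤ h * Λ 0 := by positivity
  have hlhs : Real.sqrt (h * Λ 0) * |u 0| = Real.sqrt (h * Λ 0 * u 0 ^ 2) := by
    rw [Real.sqrt_mul hhΛ, Real.sqrt_sq_eq_abs]
  rw [hlhs]
  have h1 : Real.sqrt (h * Λ 0 * u 0 ^ 2) ≤ Real.sqrt (2 * C₀ ^ 2 * A + B) :=
    Real.sqrt_le_sqrt hcomb
  have h2 : Real.sqrt (2 * C₀ ^ 2 * A + B)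
      ≤ Real.sqrt (2 * C₀ ^ 2 * A) + Real.sqrt B :=
    my_sqrt_add_le _ _ (by positivity) hBnn
  have h3 : Real.sqrt (2 * C₀ ^ 2 * A) ≤ 2 * C₀ * Real.sqrt A := by
    have hmono : 2 * C₀ ^ 2 * A ≤ (2 * C₀) ^ 2 * A := by nlinarith
    calc Real.sqrt (2 * C₀ ^ 2 * A) ≤ Real.sqrt ((2 * C₀) ^ 2 * A) :=
          Real.sqrt_le_sqrt hmono
      _ = 2 * C₀ * Real.sqrt A := by
          rw [Real.sqrt_mul (by positivity), Real.sqrt_sq (by linarith)]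
  have h4 : Real.sqrt B ≤ 2 * C₀ * Real.sqrt B :=
    le_mul_of_one_le_left (Real.sqrt_nonneg B) (by linarith)
  calc Real.sqrt (h * Λ 0 * u 0 ^ 2) ≤ Real.sqrt (2 * C₀ ^ 2 * A) + Real.sqrt B :=
        h1.trans h2
    _ ≤ 2 * C₀ * Real.sqrt A + 2 * C₀ * Real.sqrt B := by linarith
    _ = 2 * C₀ * (Real.sqrt A + Real.sqrt B) := by ring
end

section
/- (Ky Fan inequality for products.) Let A : H1 → H2 and B : H2 → H3 be compact operators between Hilbert spaces. Then for all n, k ≥ 1: s_{n+k-1}(BA) ≤ s_n(A) · s_k(B). -/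
/-!
Given approximants `F` of `A` (rank `< n`) and `G` of `B` (rank `< k`), the operator
`B F + G (A - F)` has range inside `B(ran F) + ran G`, so its rank is `< n + k - 1`, and
`B A - (B F + G (A - F)) = (B - G)(A - F)` has norm at most `‖B - G‖ ‖A - F‖`.
Taking the infimum over `F` and then over `G` gives the inequality.
-/

/-- The j-th singular value (approximation number) of an operator T between
Hilbert spaces: the infimum of ‖T - F‖ over operators F of rank < j. -/
noncomputable def sv {H1 H2 : Type*}
    [NormedAddCommGroup H1] [InnerProductSpace ℂ H1] [CompleteSpace H1]
    [NormedAddCommGroup H2] [InnerProductSpace ℂ H2] [CompleteSpace H2]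
    (T : H1 →L[ℂ] H2) (j : ℕ) : ℝ :=
  sInf {r : ℝ | ∃ F : H1 →L[ℂ] H2,
    ∃ _ : FiniteDimensional ℂ (LinearMap.range (F : H1 →ₗ[ℂ] H2)),
      Module.finrank ℂ (LinearMap.range (F : H1 →ₗ[ℂ] H2)) < j ∧ r = ‖T - F‖}

theorem Real.le_mul_sInf {x c : ℝ} {S : Set ℝ} (hS : S.Nonempty) (hc : 0 ≤ c)
    (h : ∀ s ∈ S, x ≤ c * s) : x ≤ c * sInf S := by
  rw [← smul_eq_mul, ← Real.sInf_smul_of_nonneg hc]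
  refine le_csInf hS.smul_set ?_
  rintro _ ⟨s, hs, rfl⟩
  exact h s hs

theorem range_comp_add_comp_le {R M₁ M₂ M₃ : Type*} [Ring R]
    [AddCommGroup M₁] [Module R M₁] [TopologicalSpace M₁]
    [AddCommGroup M₂] [Module R M₂] [TopologicalSpace M₂] [IsTopologicalAddGroup M₂]
    [AddCommGroup M₃] [Module R M₃] [TopologicalSpace M₃] [ContinuousAdd M₃]
    (A F : M₁ →L[R] M₂) (B G : M₂ →L[R] M₃) :
    LinearMap.range ((B.comp F + G.comp (A - F) : M₁ →L[R] M₃) : M₁ →ₗ[R] M₃) ≤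
      (LinearMap.range (F : M₁ →ₗ[R] M₂)).map (B : M₂ →ₗ[R] M₃) ⊔
        LinearMap.range (G : M₂ →ₗ[R] M₃) := by
  refine (LinearMap.range_add_le _ _).trans (sup_le_sup ?_ ?_)
  · rw [ContinuousLinearMap.toLinearMap_comp, LinearMap.range_comp]
  · rw [ContinuousLinearMap.toLinearMap_comp]
    exact LinearMap.range_comp_le_range _ _

section SingularValues

variable {H1 H2 : Type*}
  [NormedAddCommGroup H1] [InnerProductSpace ℂ H1] [CompleteSpace H1]
  [NormedAddCommGroup H2] [InnerProductSpace ℂ H2] [CompleteSpace H2]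

theorem sv_nonneg (T : H1 →L[ℂ] H2) (j : ℕ) : 0 ≤ sv T j :=
  Real.sInf_nonneg (by rintro _ ⟨F, _, _, rfl⟩; exact norm_nonneg _)

theorem sv_le_norm_sub_of_range_le {j : ℕ} (T F : H1 →L[ℂ] H2) (V : Submodule ℂ H2)
    [FiniteDimensional ℂ V] (hFV : LinearMap.range (F : H1 →ₗ[ℂ] H2) ≤ V)
    (hV : Module.finrank ℂ V < j) : sv T j ≤ ‖T - F‖ := by
  have : FiniteDimensional ℂ (LinearMap.range (F : H1 →ₗ[ℂ] H2)) :=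
    Submodule.finiteDimensional_of_le hFV
  refine csInf_le ⟨0, ?_⟩ ⟨F, this, (Submodule.finrank_mono hFV).trans_lt hV, rfl⟩
  rintro _ ⟨F', _, _, rfl⟩
  exact norm_nonneg _

theorem le_mul_sv {x c : ℝ} {j : ℕ} (T : H1 →L[ℂ] H2) (hj : 1 ≤ j) (hc : 0 ≤ c)
    (h : ∀ F : H1 →L[ℂ] H2, ∀ _ : FiniteDimensional ℂ (LinearMap.range (F : H1 →ₗ[ℂ] H2)),
      Module.finrank ℂ (LinearMap.range (F : H1 →ₗ[ℂ] H2)) < j → x ≤ c * ‖T - F‖) :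
    x ≤ c * sv T j := by
  refine Real.le_mul_sInf ⟨‖T - 0‖, 0, ?_, ?_, rfl⟩ hc ?_
  · rw [ContinuousLinearMap.toLinearMap_zero, LinearMap.range_zero]
    infer_instance
  · rwa [ContinuousLinearMap.toLinearMap_zero, LinearMap.range_zero, finrank_bot]
  · rintro _ ⟨F, hF, hFj, rfl⟩
    exact h F hF hFj

end SingularValues

theorem sv_comp_le_norm_sub_mul_norm_sub {H1 H2 H3 : Type*}
    [NormedAddCommGroup H1] [InnerProductSpace ℂ H1] [CompleteSpace H1]
    [NormedAddCommGroup H2] [InnerProductSpace ℂ H2]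
    [NormedAddCommGroup H3] [InnerProductSpace ℂ H3] [CompleteSpace H3]
    {n k : ℕ} (A F : H1 →L[ℂ] H2) (B G : H2 →L[ℂ] H3)
    [FiniteDimensional ℂ (LinearMap.range (F : H1 →ₗ[ℂ] H2))]
    [FiniteDimensional ℂ (LinearMap.range (G : H2 →ₗ[ℂ] H3))]
    (hF : Module.finrank ℂ (LinearMap.range (F : H1 →ₗ[ℂ] H2)) < n)
    (hG : Module.finrank ℂ (LinearMap.range (G : H2 →ₗ[ℂ] H3)) < k) :
    sv (B.comp A) (n + k - 1) ≤ ‖B - G‖ * ‖A - F‖ := by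
  have hrank := (Submodule.finrank_add_le_finrank_add_finrank
    ((LinearMap.range (F : H1 →ₗ[ℂ] H2)).map (B : H2 →ₗ[ℂ] H3))
    (LinearMap.range (G : H2 →ₗ[ℂ] H3))).trans
    (add_le_add_left (Submodule.finrank_map_le _ _) _)
  have hsub : B.comp A - (B.comp F + G.comp (A - F)) = (B - G).comp (A - F) := by
    ext x
    simp only [sub_apply, add_apply, ContinuousLinearMap.comp_apply, map_sub]
    abel
  calc sv (B.comp A) (n + k - 1) ≤ ‖B.comp A - (B.comp F + G.comp (A - F))‖ :=
        sv_le_norm_sub_of_range_le _ _ _ (range_comp_add_comp_le A F B G) (by omega)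
    _ = ‖(B - G).comp (A - F)‖ := by rw [hsub]
    _ ≤ ‖B - G‖ * ‖A - F‖ := ContinuousLinearMap.opNorm_comp_le _ _

theorem ky_fan_product_general
    {H1 H2 H3 : Type*}
    [NormedAddCommGroup H1] [InnerProductSpace ℂ H1] [CompleteSpace H1]
    [NormedAddCommGroup H2] [InnerProductSpace ℂ H2] [CompleteSpace H2]
    [NormedAddCommGroup H3] [InnerProductSpace ℂ H3] [CompleteSpace H3]
    (A : H1 →L[ℂ] H2) (B : H2 →L[ℂ] H3)
    (n k : ℕ) (hn : 1 ≤ n) (hk : 1 ≤ k) :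
    sv (B.comp A) (n + k - 1) ≤ sv A n * sv B k := by
  refine le_mul_sv B hk (sv_nonneg A n) fun G _ hG => ?_
  rw [mul_comm]
  exact le_mul_sv A hn (norm_nonneg _) fun F _ hF =>
    sv_comp_le_norm_sub_mul_norm_sub A F B G hF hG

/-- Ky Fan inequality for products: s_{n+k-1}(BA) ≤ s_n(A) · s_k(B) for compact
operators A : H1 → H2 and B : H2 → H3 between Hilbert spaces. -/
theorem ky_fan_product
    {H1 H2 H3 : Type*}
    [NormedAddCommGroup H1] [InnerProductSpace ℂ H1] [CompleteSpace H1]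
    [NormedAddCommGroup H2] [InnerProductSpace ℂ H2] [CompleteSpace H2]
    [NormedAddCommGroup H3] [InnerProductSpace ℂ H3] [CompleteSpace H3]
    (A : H1 →L[ℂ] H2) (B : H2 →L[ℂ] H3)
    (hA : IsCompactOperator (⇑A)) (hB : IsCompactOperator (⇑B))
    (n k : ℕ) (hn : 1 ≤ n) (hk : 1 ≤ k) :
    sv (B.comp A) (n + k - 1) ≤ sv A n * sv B k :=
  ky_fan_product_general A B n k hn hk
end
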